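/- For coprime positive integers a and c, the Dedekind sums satisfy the reciprocity formula s(a,c) - s(-c,a) = -1/4 + (1/12)(c/a + a/c + 1/(ac)). -/

import Mathlib

open Finset

/-- The sawtooth function `((x))`: `x - ⌊x⌋ - 1/2` for non-integral `x`, and `0` for `x ∈ ℤ`. -/
noncomputable def saw (x : ℝ) : ℝ := if Int.fract x = 0 then 0 else x - ⌊x⌋ - 1 / 2

/-- The Dedekind sum `s(a,c) = ∑_{n mod c} ((n/c))((na/c))`. -/
noncomputable def dedekindS (a : ℤ) (c : ℕ) : ℝ :=
  ∑ n ∈ Finset.range c, saw ((n : ℝ) / c) * saw ((n : ℝ) * (a : ℝ) / c)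

/-!
With `q(n) = ⌊an/c⌋`, the fact that `n ↦ an mod c` permutes the residues mod `c` evaluates
`s(a,c) = a(c-1)(2c-1)/(6c) - (1/c) ∑_{n<c} n q(n) - (c-1)/4`, so reciprocity amounts to
`12 (a ∑_{n<c} n ⌊an/c⌋ + c ∑_{v<a} v ⌊cv/a⌋) = (a-1)(c-1)(8ac-a-c-1)`.
For this, sum the weight `v` over the lattice points `(n, v)` of the open rectangle
`(0,c) × (0,a)`: by coprimality none lies on the diagonal `cv = an`; the points below it
contribute `∑ q(n)(q(n)+1)/2` and those above it `∑ v ⌊cv/a⌋`. The remaining `∑ q(n)²` is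
expressed through `∑ n q(n)` by the permutation identity `∑ (an mod c)² = ∑ n²`.
-/

theorem Nat.cast_mod_eq_sub_mul_div {R : Type*} [Ring R] (m n : ℕ) :
    ((m % n : ℕ) : R) = m - n * (m / n : ℕ) := by
  rw [eq_sub_iff_add_eq, ← Nat.cast_mul, ← Nat.cast_add, Nat.mod_add_div]

theorem Finset.sum_Ico_one_eq_sum_range {M : Type*} [AddCommMonoid M] {f : ℕ → M}
    (hf : f 0 = 0) (n : ℕ) : ∑ i ∈ Ico 1 n, f i = ∑ i ∈ range n, f i := by
  cases n with
  | zero => simp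
  | succ n => rw [sum_range_eq_add_Ico _ n.succ_pos, hf, zero_add]

theorem Finset.sum_range_natCast_mul_two {R : Type*} [CommRing R] (n : ℕ) :
    (∑ i ∈ range n, (i : R)) * 2 = n * (n - 1) := by
  induction n with
  | zero => simp
  | succ n ih => rw [sum_range_succ, add_mul, ih]; push_cast; ring

theorem Finset.sum_range_natCast_sq_mul_six {R : Type*} [CommRing R] (n : ℕ) :
    (∑ i ∈ range n, (i : R) ^ 2) * 6 = n * (n - 1) * (2 * n - 1) := by
  induction n with
  | zero => simp
  | succ n ih => rw [sum_range_succ, add_mul, ih]; push_cast; ring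

theorem Finset.sum_Icc_one_natCast_mul_two {R : Type*} [CommRing R] (n : ℕ) :
    (∑ i ∈ Icc 1 n, (i : R)) * 2 = n * (n + 1) := by
  rw [← Ico_add_one_right_eq_Icc, sum_Ico_one_eq_sum_range Nat.cast_zero,
    sum_range_natCast_mul_two]
  push_cast
  ring

theorem saw_of_fract_ne_zero {x : ℝ} (hx : Int.fract x ≠ 0) : saw x = Int.fract x - 1 / 2 := by
  rw [saw, if_neg hx, Int.fract]

theorem saw_neg (x : ℝ) : saw (-x) = -saw x := by
  by_cases hx : Int.fract x = 0
  · simp [saw, hx, Int.fract_neg_eq_zero.2 hx]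
  · rw [saw_of_fract_ne_zero hx, saw_of_fract_ne_zero (mt Int.fract_neg_eq_zero.1 hx),
      Int.fract_neg hx]
    ring

theorem saw_natCast_div {m c : ℕ} (hc : 0 < c) (hm : ¬ c ∣ m) :
    saw (m / c) = (m % c : ℕ) / c - 1 / 2 := by
  have hmod : ((m % c : ℕ) : ℝ) / c ≠ 0 :=
    div_ne_zero (Nat.cast_ne_zero.2 fun h => hm (Nat.dvd_of_mod_eq_zero h)) (by positivity)
  rw [saw_of_fract_ne_zero (by rwa [Int.fract_div_natCast_eq_div_natCast_mod]),
    Int.fract_div_natCast_eq_div_natCast_mod]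

theorem dedekindS_neg (a : ℤ) (c : ℕ) : dedekindS (-a) c = -dedekindS a c := by
  simp only [dedekindS, ← sum_neg_distrib, Int.cast_neg, mul_neg, neg_div, saw_neg]

namespace Nat.Coprime

variable {a c : ℕ}

theorem sum_range_mul_mod {M : Type*} [AddCommMonoid M] (h : a.Coprime c) (f : ℕ → M) :
    ∑ n ∈ range c, f (a * n % c) = ∑ n ∈ range c, f n := by
  have hmaps : Set.MapsTo (fun n => a * n % c) (range c) (range c) := fun n hn =>
    mem_range.2 (Nat.mod_lt _ (Nat.zero_lt_of_lt (mem_range.1 hn)))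
  have hinj : Set.InjOn (fun n => a * n % c) (range c) := fun m hm n hn hmn =>
    (Nat.ModEq.cancel_left_of_coprime h.symm hmn).eq_of_lt_of_lt (mem_range.1 hm) (mem_range.1 hn)
  exact sum_nbij _ hmaps hinj (surjOn_of_injOn_of_card_le _ hmaps hinj le_rfl) fun _ _ => rfl

theorem mul_ne_mul_of_pos_of_lt {n : ℕ} (h : a.Coprime c) (hn : 0 < n) (hnc : n < c) (v : ℕ) :
    c * v ≠ a * n := fun heq =>
  absurd (Nat.le_of_dvd hn (h.symm.dvd_of_dvd_mul_left ⟨v, heq.symm⟩)) (not_le.2 hnc)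

theorem filter_mul_lt_mul_eq_Icc {n : ℕ} (h : a.Coprime c) (hn : n ∈ Ico 1 c) :
    {v ∈ Ico 1 a | c * v < a * n} = Icc 1 (a * n / c) := by
  obtain ⟨hn0, hnc⟩ := mem_Ico.1 hn
  ext v
  simp only [mem_filter, mem_Ico, mem_Icc, Nat.le_div_iff_mul_le (by omega : 0 < c), mul_comm v c]
  constructor
  · rintro ⟨⟨hv0, -⟩, hlt⟩
    exact ⟨hv0, hlt.le⟩
  · rintro ⟨hv0, hle⟩
    have hlt := lt_of_le_of_ne hle (h.mul_ne_mul_of_pos_of_lt hn0 hnc v)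
    exact ⟨⟨hv0, by nlinarith⟩, hlt⟩

theorem sum_Ico_Ico_eq_below_add_above {M : Type*} [AddCommMonoid M] (h : a.Coprime c)
    (f : ℕ → ℕ → M) :
    ∑ n ∈ Ico 1 c, ∑ v ∈ Ico 1 a, f n v =
      ∑ n ∈ Ico 1 c, ∑ v ∈ Icc 1 (a * n / c), f n v +
        ∑ v ∈ Ico 1 a, ∑ n ∈ Icc 1 (c * v / a), f n v := by
  have hsplit : ∀ n ∈ Ico 1 c, ∀ v ∈ Ico 1 a,
      f n v = (if c * v < a * n then f n v else 0) + (if a * n < c * v then f n v else 0) := by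
    intro n hn v _
    obtain ⟨hn0, hnc⟩ := mem_Ico.1 hn
    rcases lt_trichotomy (c * v) (a * n) with hlt | heq | hgt
    · simp [hlt, hlt.not_gt]
    · exact absurd heq (h.mul_ne_mul_of_pos_of_lt hn0 hnc v)
    · simp [hgt, hgt.not_gt]
  rw [sum_congr rfl fun n hn => sum_congr rfl (hsplit n hn)]
  simp only [sum_add_distrib]
  rw [sum_comm (s := Ico 1 c) (t := Ico 1 a) (f := fun n v => if a * n < c * v then f n v else 0)]
  simp only [← sum_filter]
  exact congrArg₂ (· + ·) (sum_congr rfl fun n hn => by rw [h.filter_mul_lt_mul_eq_Icc hn])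
    (sum_congr rfl fun v hv => by rw [h.symm.filter_mul_lt_mul_eq_Icc hv])

theorem floor_sum_reciprocity (h : a.Coprime c) :
    12 * ((a : ℤ) * ∑ n ∈ range c, (n : ℤ) * (a * n / c : ℕ) +
        c * ∑ v ∈ range a, (v : ℤ) * (c * v / a : ℕ)) =
      (a - 1) * (c - 1) * (8 * a * c - a - c - 1) := by
  obtain rfl | hc := c.eq_zero_or_pos
  · obtain rfl := (Nat.coprime_zero_right a).1 h
    simp
  have hlin : (a : ℤ) * ∑ n ∈ range c, (n : ℤ) - c * ∑ n ∈ range c, ((a * n / c : ℕ) : ℤ) =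
      ∑ n ∈ range c, (n : ℤ) := by
    refine Eq.trans ?_ (h.sum_range_mul_mod (fun m => (m : ℤ)))
    simp only [mul_sum, ← sum_sub_distrib, Nat.cast_mod_eq_sub_mul_div, Nat.cast_mul]
  have hsq : (a : ℤ) ^ 2 * ∑ n ∈ range c, (n : ℤ) ^ 2 -
      2 * a * c * ∑ n ∈ range c, (n : ℤ) * (a * n / c : ℕ) +
      c ^ 2 * ∑ n ∈ range c, ((a * n / c : ℕ) : ℤ) ^ 2 = ∑ n ∈ range c, (n : ℤ) ^ 2 := by
    refine Eq.trans ?_ (h.sum_range_mul_mod (fun m => (m : ℤ) ^ 2))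
    simp only [mul_sum, ← sum_sub_distrib, ← sum_add_distrib, Nat.cast_mod_eq_sub_mul_div,
      Nat.cast_mul]
    exact sum_congr rfl fun n _ => by ring
  have hlattice : ∑ n ∈ range c, ((a * n / c : ℕ) : ℤ) ^ 2 +
      ∑ n ∈ range c, ((a * n / c : ℕ) : ℤ) + 2 * ∑ v ∈ range a, (v : ℤ) * (c * v / a : ℕ) =
        2 * (c - 1) * ∑ v ∈ range a, (v : ℤ) := by
    have := h.sum_Ico_Ico_eq_below_add_above (fun _ v => (v : ℤ) * 2)
    simp only [← sum_mul, sum_Icc_one_natCast_mul_two, sum_const, Nat.card_Icc, Nat.card_Ico,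
      nsmul_eq_mul', Nat.add_sub_cancel, Nat.cast_sub hc, Nat.cast_one] at this
    rw [sum_Ico_one_eq_sum_range (by simp), sum_Ico_one_eq_sum_range (by simp),
      sum_Ico_one_eq_sum_range (by simp)] at this
    simp only [mul_add, mul_one, sum_add_distrib, ← pow_two] at this
    linear_combination -this
  -- `hlin` and `hsq` determine `c ∑ q` and `c² ∑ q²`, so the claim follows from `c² * hlattice`.
  apply mul_left_cancel₀ (Nat.cast_ne_zero.2 hc.ne' : (c : ℤ) ≠ 0)
  linear_combination 6 * c ^ 2 * hlattice - 6 * hsq + 6 * c * hlin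
    + 6 * c ^ 2 * (c - 1) * sum_range_natCast_mul_two (R := ℤ) a
    + (a ^ 2 - 1) * sum_range_natCast_sq_mul_six (R := ℤ) c
    - 3 * c * (a - 1) * sum_range_natCast_mul_two (R := ℤ) c

end Nat.Coprime

theorem dedekindS_natCast_eq_sum_mul_mod {a c : ℕ} (h : a.Coprime c) (hc : 0 < c) :
    dedekindS a c = (∑ n ∈ range c, (n : ℝ) * (a * n % c : ℕ)) / c ^ 2 - (c - 1) / 4 := by
  have hterm : ∀ n ∈ Ico 1 c, saw (n / c) * saw (n * (a : ℤ) / c) =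
      (n / c - 1 / 2) * ((a * n % c : ℕ) / c - 1 / 2) := by
    intro n hn
    obtain ⟨hn0, hnc⟩ := mem_Ico.1 hn
    have hcn : ¬ c ∣ n := fun hd => (Nat.le_of_dvd hn0 hd).not_gt hnc
    have hcan : ¬ c ∣ a * n := fun hd => hcn (h.symm.dvd_of_dvd_mul_left hd)
    rw [Int.cast_natCast, ← Nat.cast_mul, Nat.mul_comm n a, saw_natCast_div hc hcn,
      saw_natCast_div hc hcan, Nat.mod_eq_of_lt hnc]
  have hsum : ∑ n ∈ range c, ((a * n % c : ℕ) : ℝ) = ∑ n ∈ range c, (n : ℝ) :=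
    h.sum_range_mul_mod (fun m => (m : ℝ))
  -- At `n = 0` the summand of `dedekindS` is `0`, but the polynomial summand is `1/4`.
  calc dedekindS a c =
        ∑ n ∈ range c, ((n / c - 1 / 2) * ((a * n % c : ℕ) / c - 1 / 2) : ℝ) - 1 / 4 := by
        rw [dedekindS, sum_range_eq_add_Ico _ hc, sum_range_eq_add_Ico _ hc, sum_congr rfl hterm]
        norm_num [saw]
    _ = (∑ n ∈ range c, (n : ℝ) * (a * n % c : ℕ)) / c ^ 2 -
          (∑ n ∈ range c, (n : ℝ) + ∑ n ∈ range c, ((a * n % c : ℕ) : ℝ)) / (2 * c) +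
          c / 4 - 1 / 4 := by
        rw [sum_congr rfl fun n _ => show ((n / c - 1 / 2) * ((a * n % c : ℕ) / c - 1 / 2) : ℝ) =
          n * (a * n % c : ℕ) / c ^ 2 - (n + (a * n % c : ℕ)) / (2 * c) + 1 / 4 by ring]
        simp only [sum_add_distrib, sum_sub_distrib, ← sum_div, sum_const, card_range, nsmul_eq_mul]
        ring
    _ = _ := by
        rw [hsum]
        field_simp
        linear_combination (-4 * c : ℝ) * sum_range_natCast_mul_two (R := ℝ) c

theorem dedekindS_natCast_eq_sum_mul_div {a c : ℕ} (h : a.Coprime c) (hc : 0 < c) :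
    dedekindS a c = a * (c - 1) * (2 * c - 1) / (6 * c) -
      (∑ n ∈ range c, (n : ℝ) * (a * n / c : ℕ)) / c - (c - 1) / 4 := by
  have hsum : ∑ n ∈ range c, (n : ℝ) * (a * n % c : ℕ) =
      a * ∑ n ∈ range c, (n : ℝ) ^ 2 - c * ∑ n ∈ range c, (n : ℝ) * (a * n / c : ℕ) := by
    simp only [Nat.cast_mod_eq_sub_mul_div, Nat.cast_mul, mul_sum, ← sum_sub_distrib]
    exact sum_congr rfl fun n _ => by ring
  rw [dedekindS_natCast_eq_sum_mul_mod h hc, hsum]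
  field_simp
  linear_combination (4 * a : ℝ) * sum_range_natCast_sq_mul_six (R := ℝ) c

/-- Dedekind reciprocity: for coprime positive integers `a, c`,
`s(a,c) - s(-c,a) = -1/4 + (1/12)(c/a + a/c + 1/(ac))`. -/
theorem dedekindS_reciprocity (a c : ℕ) (ha : 0 < a) (hc : 0 < c) (h : Nat.gcd a c = 1) :
    dedekindS (a : ℤ) c - dedekindS (-(c : ℤ)) a =
      -(1 / 4) + (1 / 12) * ((c : ℝ) / a + (a : ℝ) / c + 1 / ((a : ℝ) * c)) := by
  have hco : a.Coprime c := h
  have key := congrArg (Int.cast : ℤ → ℝ) hco.floor_sum_reciprocity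
  simp only [Int.cast_mul, Int.cast_add, Int.cast_sub, Int.cast_sum, Int.cast_natCast,
    Int.cast_ofNat, Int.cast_one] at key
  rw [dedekindS_neg, sub_neg_eq_add, dedekindS_natCast_eq_sum_mul_div hco hc,
    dedekindS_natCast_eq_sum_mul_div hco.symm ha]
  field_simp
  linear_combination -24 * key
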